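/- For integers n ≥ 2 and m ≥ 3, the F-index of the vertex S-join of the path P_n and the cycle C_m is F(P_n ∨̇_S C_m) = mn{(m² + n²) + 6(m + n)} − 6m² + 24mn − 10m + 16n − 22. -/

import Mathlib

/-- The subdivision graph `S(G)`: a new vertex is inserted into each edge of `G`
(each edge is replaced by a path of length 2). The inserted vertices form the
right summand `↥G.edgeSet`. -/
def Sgraph {V : Type*} (G : SimpleGraph V) : SimpleGraph (V ⊕ ↥G.edgeSet) where
  Adj x y :=
    match x, y with
    | Sum.inl v, Sum.inr e => v ∈ (e : Sym2 V)
    | Sum.inr e, Sum.inl v => v ∈ (e : Sym2 V)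
    | _, _ => False
  symm := ⟨by rintro (v | e) (w | f) h <;> exact h⟩
  loopless := ⟨by rintro (v | e) h <;> exact h⟩

/-- The graph `R(G)`: obtained from `G` by inserting a new vertex into each edge of `G`
and joining each new vertex to the end vertices of its corresponding edge. -/
def Rgraph {V : Type*} (G : SimpleGraph V) : SimpleGraph (V ⊕ ↥G.edgeSet) where
  Adj x y :=
    match x, y with
    | Sum.inl v, Sum.inl w => G.Adj v w
    | Sum.inl v, Sum.inr e => v ∈ (e : Sym2 V)
    | Sum.inr e, Sum.inl v => v ∈ (e : Sym2 V)
    | Sum.inr _, Sum.inr _ => False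
  symm := ⟨by
    rintro (v | e) (w | f) h
    · exact G.adj_symm h
    · exact h
    · exact h
    · exact h⟩
  loopless := ⟨by
    rintro (v | e) h
    · exact G.loopless.irrefl v h
    · exact h⟩

/-- The graph `Q(G)`: obtained from `G` by inserting a new vertex into each edge of `G`,
then joining by edges those pairs of new vertices lying on adjacent edges of `G`. -/
def Qgraph {V : Type*} (G : SimpleGraph V) : SimpleGraph (V ⊕ ↥G.edgeSet) where
  Adj x y :=
    match x, y with
    | Sum.inl _, Sum.inl _ => False
    | Sum.inl v, Sum.inr e => v ∈ (e : Sym2 V)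
    | Sum.inr e, Sum.inl v => v ∈ (e : Sym2 V)
    | Sum.inr e, Sum.inr f => e ≠ f ∧ ∃ v, v ∈ (e : Sym2 V) ∧ v ∈ (f : Sym2 V)
  symm := ⟨by
    rintro (v | e) (w | f) h
    · exact h
    · exact h
    · exact h
    · exact ⟨h.1.symm, by obtain ⟨v, h1, h2⟩ := h.2; exact ⟨v, h2, h1⟩⟩⟩
  loopless := ⟨by
    rintro (v | e) h
    · exact h
    · exact h.1 rfl⟩

/-- The total graph `T(G)`: obtained from `G` by inserting a new vertex into each edge,
joining each new vertex to the end vertices of its corresponding edge, and joining by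
edges those pairs of new vertices lying on adjacent edges of `G`. -/
def Tgraph {V : Type*} (G : SimpleGraph V) : SimpleGraph (V ⊕ ↥G.edgeSet) where
  Adj x y :=
    match x, y with
    | Sum.inl v, Sum.inl w => G.Adj v w
    | Sum.inl v, Sum.inr e => v ∈ (e : Sym2 V)
    | Sum.inr e, Sum.inl v => v ∈ (e : Sym2 V)
    | Sum.inr e, Sum.inr f => e ≠ f ∧ ∃ v, v ∈ (e : Sym2 V) ∧ v ∈ (f : Sym2 V)
  symm := ⟨by
    rintro (v | e) (w | f) h
    · exact G.adj_symm h
    · exact h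
    · exact h
    · exact ⟨h.1.symm, by obtain ⟨v, h1, h2⟩ := h.2; exact ⟨v, h2, h1⟩⟩⟩
  loopless := ⟨by
    rintro (v | e) h
    · exact G.loopless.irrefl v h
    · exact h.1 rfl⟩

/-- The disjoint union of `H` and `K` together with all edges joining a vertex `a` of `H`
with `P a` to every vertex of `K`. -/
def joinOn {A B : Type*} (H : SimpleGraph A) (K : SimpleGraph B) (P : A → Prop) :
    SimpleGraph (A ⊕ B) where
  Adj x y :=
    match x, y with
    | Sum.inl a, Sum.inl a' => H.Adj a a'
    | Sum.inr b, Sum.inr b' => K.Adj b b'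
    | Sum.inl a, Sum.inr _ => P a
    | Sum.inr _, Sum.inl a => P a
  symm := ⟨by
    rintro (a | b) (a' | b') h
    · exact H.adj_symm h
    · exact h
    · exact h
    · exact K.adj_symm h⟩
  loopless := ⟨by
    rintro (a | b) h
    · exact H.loopless.irrefl a h
    · exact K.loopless.irrefl b h⟩

/-- The vertex S-join `G₁ ∨̇_S G₂`: obtained from `S(G₁)` and `G₂` by joining each vertex
of `V(G₁)` to every vertex of `G₂`. -/
def vertexSJoin {V₁ V₂ : Type*} (G₁ : SimpleGraph V₁) (G₂ : SimpleGraph V₂) :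
    SimpleGraph ((V₁ ⊕ ↥G₁.edgeSet) ⊕ V₂) :=
  joinOn (Sgraph G₁) G₂ (fun x => x.isLeft)

/-- The edge S-join `G₁ ∨̱_S G₂`: obtained from `S(G₁)` and `G₂` by joining each inserted
vertex (each vertex of `I(G₁)`) to every vertex of `G₂`. -/
def edgeSJoin {V₁ V₂ : Type*} (G₁ : SimpleGraph V₁) (G₂ : SimpleGraph V₂) :
    SimpleGraph ((V₁ ⊕ ↥G₁.edgeSet) ⊕ V₂) :=
  joinOn (Sgraph G₁) G₂ (fun x => x.isRight)

/-- The vertex R-join `G₁ ∨̇_R G₂`. -/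
def vertexRJoin {V₁ V₂ : Type*} (G₁ : SimpleGraph V₁) (G₂ : SimpleGraph V₂) :
    SimpleGraph ((V₁ ⊕ ↥G₁.edgeSet) ⊕ V₂) :=
  joinOn (Rgraph G₁) G₂ (fun x => x.isLeft)

/-- The edge R-join `G₁ ∨̱_R G₂`. -/
def edgeRJoin {V₁ V₂ : Type*} (G₁ : SimpleGraph V₁) (G₂ : SimpleGraph V₂) :
    SimpleGraph ((V₁ ⊕ ↥G₁.edgeSet) ⊕ V₂) :=
  joinOn (Rgraph G₁) G₂ (fun x => x.isRight)

/-- The vertex Q-join `G₁ ∨̇_Q G₂`. -/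
def vertexQJoin {V₁ V₂ : Type*} (G₁ : SimpleGraph V₁) (G₂ : SimpleGraph V₂) :
    SimpleGraph ((V₁ ⊕ ↥G₁.edgeSet) ⊕ V₂) :=
  joinOn (Qgraph G₁) G₂ (fun x => x.isLeft)

/-- The edge Q-join `G₁ ∨̱_Q G₂`. -/
def edgeQJoin {V₁ V₂ : Type*} (G₁ : SimpleGraph V₁) (G₂ : SimpleGraph V₂) :
    SimpleGraph ((V₁ ⊕ ↥G₁.edgeSet) ⊕ V₂) :=
  joinOn (Qgraph G₁) G₂ (fun x => x.isRight)

/-- The vertex T-join `G₁ ∨̇_T G₂`. -/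
def vertexTJoin {V₁ V₂ : Type*} (G₁ : SimpleGraph V₁) (G₂ : SimpleGraph V₂) :
    SimpleGraph ((V₁ ⊕ ↥G₁.edgeSet) ⊕ V₂) :=
  joinOn (Tgraph G₁) G₂ (fun x => x.isLeft)

/-- The edge T-join `G₁ ∨̱_T G₂`. -/
def edgeTJoin {V₁ V₂ : Type*} (G₁ : SimpleGraph V₁) (G₂ : SimpleGraph V₂) :
    SimpleGraph ((V₁ ⊕ ↥G₁.edgeSet) ⊕ V₂) :=
  joinOn (Tgraph G₁) G₂ (fun x => x.isRight)

/-- Degree of a vertex in a graph on a finite vertex type. -/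
noncomputable def gdeg {V : Type*} [Finite V] (G : SimpleGraph V) (v : V) : ℕ :=
  haveI : Fintype ↥(G.neighborSet v) := Fintype.ofFinite _
  G.degree v

/-- The forgotten topological index (F-index): `F(G) = ∑_{v ∈ V(G)} d_G(v)³`. -/
noncomputable def Findex {V : Type*} [Finite V] (G : SimpleGraph V) : ℕ :=
  haveI := Fintype.ofFinite V
  ∑ v : V, gdeg G v ^ 3

/-- The first Zagreb index: `M₁(G) = ∑_{v ∈ V(G)} d_G(v)²`. -/
noncomputable def M1 {V : Type*} [Finite V] (G : SimpleGraph V) : ℕ :=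
  haveI := Fintype.ofFinite V
  ∑ v : V, gdeg G v ^ 2

/-- `M₄(G) = ∑_{v ∈ V(G)} d_G(v)⁴`. -/
noncomputable def M4 {V : Type*} [Finite V] (G : SimpleGraph V) : ℕ :=
  haveI := Fintype.ofFinite V
  ∑ v : V, gdeg G v ^ 4

/-- The hyper Zagreb index: `HM(G) = ∑_{uv ∈ E(G)} (d_G(u) + d_G(v))²`. -/
noncomputable def HM {V : Type*} [Finite V] (G : SimpleGraph V) : ℕ :=
  haveI : Fintype ↥G.edgeSet := Fintype.ofFinite _
  ∑ e : ↥G.edgeSet,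
    Sym2.lift ⟨fun u v => (gdeg G u + gdeg G v) ^ 2,
      fun u v => by dsimp only; rw [add_comm]⟩ (e : Sym2 V)

/-- The redefined Zagreb index:
`ReZM(G) = ∑_{uv ∈ E(G)} d_G(u) d_G(v) (d_G(u) + d_G(v))`. -/
noncomputable def ReZM {V : Type*} [Finite V] (G : SimpleGraph V) : ℕ :=
  haveI : Fintype ↥G.edgeSet := Fintype.ofFinite _
  ∑ e : ↥G.edgeSet,
    Sym2.lift ⟨fun u v => gdeg G u * gdeg G v * (gdeg G u + gdeg G v),
      fun u v => by dsimp only; ring⟩ (e : Sym2 V)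

/-- The number of edges of `G`. -/
noncomputable def numEdges {V : Type*} (G : SimpleGraph V) : ℕ :=
  Nat.card ↥G.edgeSet

/-! In `G₁ ∨̇_S G₂` a vertex `v` of `G₁` has degree `d_{G₁}(v) + |V₂|`, a subdivision vertex has
degree `2` and a vertex `w` of `G₂` has degree `d_{G₂}(w) + |V₁|`. For `P_n ∨̇_S C_m` this gives
two vertices of degree `m + 1`, `n - 2` of degree `m + 2`, `n - 1` of degree `2` and `m` of
degree `n + 2`; summing the cubes yields the formula. -/

open SimpleGraph

section Degree

variable {V : Type*} [Finite V] (G : SimpleGraph V)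

lemma gdeg_eq_natCard (v : V) : gdeg G v = Nat.card {w // G.Adj v w} := by
  unfold gdeg
  let := Fintype.ofFinite (G.neighborSet v)
  rw [← card_neighborSet_eq_degree, ← Nat.card_eq_fintype_card]
  rfl

lemma gdeg_eq_ncard_of_adj_iff {v : V} {s : Set V} (h : ∀ w, G.Adj v w ↔ w ∈ s) :
    gdeg G v = s.ncard := by
  rw [gdeg_eq_natCard, ← Nat.card_coe_set_eq]
  exact Nat.card_congr (Equiv.subtypeEquivRight h)

lemma gdeg_eq_degree [Fintype V] (v : V) [Fintype (G.neighborSet v)] :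
    gdeg G v = G.degree v := by
  rw [gdeg_eq_natCard, ← card_neighborSet_eq_degree, ← Nat.card_eq_fintype_card]
  rfl

lemma Findex_eq_sum [Fintype V] : Findex G = ∑ v, gdeg G v ^ 3 := by
  unfold Findex
  rw [Subsingleton.elim (Fintype.ofFinite V) ‹Fintype V›]

lemma sum_gdeg_eq_two_mul_numEdges [Fintype V] : ∑ v, gdeg G v = 2 * numEdges G := by
  classical
  simp only [gdeg_eq_degree, sum_degrees_eq_twice_card_edges, numEdges, edgeFinset,
    Set.toFinset_card, Nat.card_eq_fintype_card]

lemma natCard_incidence_eq_gdeg (v : V) :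
    Nat.card {e : G.edgeSet // v ∈ (e : Sym2 V)} = gdeg G v := by
  classical
  rw [gdeg_eq_natCard]
  refine Nat.card_congr (Equiv.trans ?_ (G.incidenceSetEquivNeighborSet v))
  exact
    { toFun := fun e => ⟨e.1.1, e.1.2, e.2⟩
      invFun := fun e => ⟨⟨e.1, e.2.1⟩, e.2.2⟩ }

end Degree

lemma Nat.card_subtype_sum {A B : Type*} [Finite A] [Finite B] (p : A ⊕ B → Prop) :
    Nat.card {y // p y} = Nat.card {a // p (Sum.inl a)} + Nat.card {b // p (Sum.inr b)} := by
  rw [Nat.card_congr Equiv.subtypeSum, Nat.card_sum]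

lemma natCard_mem_edge {V : Type*} {G : SimpleGraph V} (e : G.edgeSet) :
    Nat.card {w // w ∈ (e : Sym2 V)} = 2 := by
  obtain ⟨e, he⟩ := e
  induction e with
  | h a b =>
    have hab : a ≠ b := (G.mem_edgeSet.mp he).ne
    rw [← Nat.card_coe_set_eq {a, b} |>.trans (Set.ncard_pair hab)]
    exact Nat.card_congr (Equiv.subtypeEquivRight fun w => by simp [Sym2.mem_iff])

section Join

variable {A B : Type*} [Finite A] [Finite B] (H : SimpleGraph A) (K : SimpleGraph B)
  (P : A → Prop)

lemma gdeg_joinOn_inl (a : A) [Decidable (P a)] :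
    gdeg (joinOn H K P) (.inl a) = gdeg H a + if P a then Nat.card B else 0 := by
  rw [gdeg_eq_natCard, Nat.card_subtype_sum, gdeg_eq_natCard]
  congr 1
  split_ifs with ha
  · exact Nat.card_congr (Equiv.subtypeUnivEquiv fun _ => ha)
  · have : IsEmpty {b // (joinOn H K P).Adj (.inl a) (.inr b)} := ⟨fun b => ha b.2⟩
    exact Nat.card_of_isEmpty

lemma gdeg_joinOn_inr (b : B) :
    gdeg (joinOn H K P) (.inr b) = Nat.card {a // P a} + gdeg K b := by
  rw [gdeg_eq_natCard, Nat.card_subtype_sum, gdeg_eq_natCard]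
  rfl

end Join

section Subdivision

variable {V : Type*} [Finite V] (G : SimpleGraph V)

lemma gdeg_Sgraph_inl (v : V) : gdeg (Sgraph G) (.inl v) = gdeg G v := by
  have : IsEmpty {w // (Sgraph G).Adj (.inl v) (.inl w)} := ⟨fun w => w.2⟩
  rw [gdeg_eq_natCard, Nat.card_subtype_sum, Nat.card_of_isEmpty, zero_add,
    ← natCard_incidence_eq_gdeg]
  rfl

lemma gdeg_Sgraph_inr (e : G.edgeSet) : gdeg (Sgraph G) (.inr e) = 2 := by
  have : IsEmpty {f // (Sgraph G).Adj (.inr e) (.inr f)} := ⟨fun f => f.2⟩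
  rw [gdeg_eq_natCard, Nat.card_subtype_sum, ← natCard_mem_edge e]
  simp only [Nat.card_of_isEmpty, add_zero]
  rfl

end Subdivision

section VertexSJoin

variable {V₁ V₂ : Type*} (G₁ : SimpleGraph V₁) (G₂ : SimpleGraph V₂)

lemma gdeg_vertexSJoin_inl_inl [Finite V₁] [Finite V₂] (v : V₁) :
    gdeg (vertexSJoin G₁ G₂) (.inl (.inl v)) = gdeg G₁ v + Nat.card V₂ := by
  rw [vertexSJoin, gdeg_joinOn_inl, gdeg_Sgraph_inl, if_pos Sum.isLeft_inl]

lemma gdeg_vertexSJoin_inl_inr [Finite V₁] [Finite V₂] (e : G₁.edgeSet) :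
    gdeg (vertexSJoin G₁ G₂) (.inl (.inr e)) = 2 := by
  rw [vertexSJoin, gdeg_joinOn_inl, gdeg_Sgraph_inr, if_neg (by simp)]

lemma gdeg_vertexSJoin_inr [Finite V₁] [Finite V₂] (w : V₂) :
    gdeg (vertexSJoin G₁ G₂) (.inr w) = Nat.card V₁ + gdeg G₂ w := by
  rw [vertexSJoin, gdeg_joinOn_inr, Nat.card_congr Equiv.sumIsLeft]

theorem Findex_vertexSJoin [Fintype V₁] [Fintype V₂] :
    Findex (vertexSJoin G₁ G₂) = ∑ v, (gdeg G₁ v + Nat.card V₂) ^ 3 + 8 * numEdges G₁ +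
      ∑ w, (Nat.card V₁ + gdeg G₂ w) ^ 3 := by
  classical
  have := Fintype.ofFinite G₁.edgeSet
  simp only [Findex_eq_sum, Fintype.sum_sum_type, gdeg_vertexSJoin_inl_inl,
    gdeg_vertexSJoin_inl_inr, gdeg_vertexSJoin_inr, Finset.sum_const, Finset.card_univ,
    smul_eq_mul, numEdges, Nat.card_eq_fintype_card]
  ring

end VertexSJoin

section Path

lemma gdeg_pathGraph_of_ne {n : ℕ} (v : Fin n) (h₀ : v.val ≠ 0) (h₁ : v.val ≠ n - 1) :
    gdeg (pathGraph n) v = 2 := by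
  have hv₁ : v.val - 1 < n := by omega
  have hv₂ : v.val + 1 < n := by omega
  refine (gdeg_eq_ncard_of_adj_iff _ (s := {⟨v - 1, hv₁⟩, ⟨v + 1, hv₂⟩}) fun w => ?_).trans
    (Set.ncard_pair (by simp only [Ne, Fin.ext_iff]; omega))
  simp only [pathGraph_adj, Set.mem_insert_iff, Set.mem_singleton_iff, Fin.ext_iff]
  omega

lemma gdeg_pathGraph_zero (k : ℕ) : gdeg (pathGraph (k + 2)) 0 = 1 := by
  refine (gdeg_eq_ncard_of_adj_iff _ (s := {1}) fun w => ?_).trans (Set.ncard_singleton _)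
  simp only [pathGraph_adj, Set.mem_singleton_iff, Fin.ext_iff, Fin.val_zero, Fin.val_one]
  omega

lemma gdeg_pathGraph_last (k : ℕ) : gdeg (pathGraph (k + 2)) (Fin.last (k + 1)) = 1 := by
  refine (gdeg_eq_ncard_of_adj_iff _ (s := {(Fin.last k).castSucc}) fun w => ?_).trans
    (Set.ncard_singleton _)
  simp only [pathGraph_adj, Set.mem_singleton_iff, Fin.ext_iff, Fin.val_last, Fin.val_castSucc]
  omega

lemma sum_gdeg_pathGraph {M : Type*} [AddCommMonoid M] (f : ℕ → M) (k : ℕ) :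
    ∑ v, f (gdeg (pathGraph (k + 2)) v) = 2 • f 1 + k • f 2 := by
  rw [Fin.sum_univ_succ, Fin.sum_univ_castSucc, gdeg_pathGraph_zero, Fin.succ_last,
    gdeg_pathGraph_last]
  have hmid : ∀ i : Fin k, gdeg (pathGraph (k + 2)) i.castSucc.succ = 2 := fun i =>
    gdeg_pathGraph_of_ne _ (by simp) (by simp; omega)
  simp only [hmid, Finset.sum_const, Finset.card_univ, Fintype.card_fin]
  abel

lemma numEdges_pathGraph (k : ℕ) : numEdges (pathGraph (k + 2)) = k + 1 := by
  have h := sum_gdeg_eq_two_mul_numEdges (pathGraph (k + 2))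
  rw [sum_gdeg_pathGraph (fun d => d)] at h
  simp only [smul_eq_mul] at h
  omega

end Path

lemma gdeg_cycleGraph (k : ℕ) (v : Fin (k + 3)) : gdeg (cycleGraph (k + 3)) v = 2 := by
  classical
  rw [gdeg_eq_degree, cycleGraph_degree_three_le]

theorem Findex_vertexSJoin_ex9 (n m : ℕ) (hn : 2 ≤ n) (hm : 3 ≤ m) :
    (Findex (vertexSJoin (SimpleGraph.pathGraph n) (SimpleGraph.cycleGraph m)) : ℤ) =
      (m : ℤ) * (n : ℤ) * (((m : ℤ) ^ 2 + (n : ℤ) ^ 2) + 6 * ((m : ℤ) + (n : ℤ))) - 6 * (m : ℤ) ^ 2 + 24 * (m : ℤ) * (n : ℤ) - 10 * (m : ℤ) + 16 * (n : ℤ) - 22 := by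
  obtain ⟨k, rfl⟩ : ∃ k, n = k + 2 := ⟨n - 2, by omega⟩
  obtain ⟨j, rfl⟩ : ∃ j, m = j + 3 := ⟨m - 3, by omega⟩
  rw [Findex_vertexSJoin, sum_gdeg_pathGraph (fun d => (d + Nat.card (Fin (j + 3))) ^ 3),
    numEdges_pathGraph]
  simp only [gdeg_cycleGraph, Nat.card_fin, Finset.sum_const, Finset.card_univ,
    Fintype.card_fin, smul_eq_mul]
  push_cast
  ring
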